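/- arXiv:1205.6360 — 5 statements merged into one kernel-verified Lean document; each statement's English description precedes it below -/
import Mathlib

section
/- Let 0 < r < 1/2, h > 0, and let 0 = t₀ < t₁ < ⋯ < t_N = 1 be a partition of I = (0,1) into subintervals γᵢ = (tᵢ₋₁, tᵢ) each of length at most h. Let v : [0,1] → ℝ be absolutely continuous with square-integrable derivative g. Then the diagonal sum satisfies ∑_{i=1}^N ∬_{γᵢ × γᵢ} |v(y) − v(x)|² / |y − x|^{1+2r} dx dy ≤ (1/(1 − 2r)) · h^{2−2r} · ∫₀¹ g(t)² dt. -/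
/-!
Cauchy–Schwarz gives `|v y - v x|² ≤ |y - x| ∫_{Ι x y} g²`, so on a cell `(a, b]` the double
integral is at most `∫ g(s)² W(s) ds` after exchanging the order of integration (Tonelli, in
`ℝ≥0∞`), where `W(s) = ∬ 1_{s ∈ Ι x y} |y - x|^(-β) dx dy` and `β = 2r`. Splitting `W` into the
parts `x < s ≤ y` and `y < s ≤ x`, which are equal by symmetry, and integrating explicitly gives
`W(s) = 2 (L^p - (b - s)^p - (s - a)^p) / ((1 - β) p)` with `p = 2 - β`, `L = b - a`; the power
mean inequality `L^p ≤ 2 ((b - s)^p + (s - a)^p)` then bounds `W` by `L^p / (1 - β)`, and `L ≤ h`.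
Summing over the cells gives the claim.
-/

open MeasureTheory Set
open scoped ENNReal NNReal Interval

theorem sq_setIntegral_le_measureReal_mul {α : Type*} [MeasurableSpace α] {μ : Measure α}
    {t : Set α} {f : α → ℝ} (ht : μ t ≠ ∞) (hf2 : IntegrableOn (fun x => f x ^ 2) t μ) :
    (∫ x in t, f x ∂μ) ^ 2 ≤ μ.real t * ∫ x in t, f x ^ 2 ∂μ := by
  by_cases hf : IntegrableOn f t μ
  · rcases eq_or_ne (μ t) 0 with h0 | h0
    · simp [Measure.restrict_eq_zero.mpr h0]
    have hpos : 0 < μ.real t := ENNReal.toReal_pos h0 ht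
    have jensen := (Even.convexOn_pow (𝕜 := ℝ) even_two).map_set_average_le
      (continuous_pow 2).continuousOn isClosed_univ h0 ht (.of_forall fun _ => mem_univ _) hf hf2
    simp only [setAverage_eq, smul_eq_mul] at jensen
    rw [mul_pow, inv_pow, ← div_eq_inv_mul, ← div_eq_inv_mul,
      div_le_div_iff₀ (by positivity) hpos] at jensen
    nlinarith
  · rw [integral_undef hf, sq, zero_mul]
    exact mul_nonneg measureReal_nonneg
      (setIntegral_nonneg_of_ae_restrict (.of_forall fun x => sq_nonneg _))

theorem sq_intervalIntegral_div_abs_rpow_le {g : ℝ → ℝ} {x y β : ℝ}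
    (hg2 : IntegrableOn (fun s => g s ^ 2) (Ι x y)) :
    (∫ s in x..y, g s) ^ 2 / |y - x| ^ (1 + β) ≤ |y - x| ^ (-β) * ∫ s in Ι x y, g s ^ 2 := by
  rcases eq_or_ne x y with rfl | hxy
  · simp
  have hd : 0 < |y - x| := abs_pos.mpr (sub_ne_zero.mpr hxy.symm)
  have hsq : (∫ s in x..y, g s) ^ 2 = (∫ s in Ι x y, g s) ^ 2 := by
    rw [← sq_abs, ← Real.norm_eq_abs, intervalIntegral.norm_integral_eq_norm_integral_uIoc,
      Real.norm_eq_abs, sq_abs]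
  have cs := sq_setIntegral_le_measureReal_mul (by simp [Real.volume_uIoc]) hg2
  rw [measureReal_def, Real.volume_uIoc, ENNReal.toReal_ofReal (abs_nonneg _)] at cs
  rw [hsq, div_le_iff₀ (by positivity), Real.rpow_add hd, Real.rpow_one]
  calc _ ≤ |y - x| * ∫ s in Ι x y, g s ^ 2 := cs
    _ = _ := by rw [Real.rpow_neg hd.le]; field_simp

theorem ofReal_integral_le_lintegral_ofReal {α : Type*} [MeasurableSpace α] {μ : Measure α}
    {f : α → ℝ} (hf : 0 ≤ f) :
    ENNReal.ofReal (∫ x, f x ∂μ) ≤ ∫⁻ x, ENNReal.ofReal (f x) ∂μ := by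
  simpa [Real.enorm_of_nonneg (integral_nonneg hf), Real.enorm_of_nonneg (hf _)]
    using enorm_integral_le_lintegral_enorm f

theorem lintegral_lintegral_lintegral_mul_left_swap {α β γ : Type*} [MeasurableSpace α]
    [MeasurableSpace β] [MeasurableSpace γ] {μ : Measure α} {ν : Measure β} {ρ : Measure γ}
    [SFinite μ] [SFinite ν] [SFinite ρ] {φ : α → β → γ → ℝ≥0∞}
    (hφ : Measurable fun p : α × β × γ => φ p.1 p.2.1 p.2.2) {G : γ → ℝ≥0∞}
    (hG : AEMeasurable G ρ) :
    ∫⁻ x, ∫⁻ y, ∫⁻ s, G s * φ x y s ∂ρ ∂ν ∂μ = ∫⁻ s, G s * ∫⁻ x, ∫⁻ y, φ x y s ∂ν ∂μ ∂ρ := by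
  have inner (x : α) :
      ∫⁻ y, ∫⁻ s, G s * φ x y s ∂ρ ∂ν = ∫⁻ s, G s * ∫⁻ y, φ x y s ∂ν ∂ρ := by
    rw [lintegral_lintegral_swap (hG.comp_snd.mul (hφ.comp measurable_prodMk_left).aemeasurable)]
    congr with s
    exact lintegral_const_mul _ (hφ.comp (by fun_prop : Measurable fun y : β => (x, y, s)))
  have hφ' : Measurable fun p : (α × γ) × β => φ p.1.1 p.2 p.1.2 :=
    hφ.comp (measurable_fst.fst.prodMk (measurable_snd.prodMk measurable_fst.snd))
  simp_rw [inner]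
  rw [lintegral_lintegral_swap (hG.comp_snd.mul hφ'.lintegral_prod_right'.aemeasurable)]
  congr with s
  exact lintegral_const_mul _
    (hφ'.lintegral_prod_right'.comp (measurable_id.prodMk measurable_const))

theorem Real.rpow_add_le_two_mul_rpow_add_rpow {p u w : ℝ} (hu : 0 ≤ u) (hw : 0 ≤ w)
    (hp1 : 1 ≤ p) (hp2 : p ≤ 2) : (u + w) ^ p ≤ 2 * (u ^ p + w ^ p) := by
  lift u to ℝ≥0 using hu
  lift w to ℝ≥0 using hw
  have mean : ((u : ℝ) + w) ^ p ≤ 2 ^ (p - 1) * (u ^ p + w ^ p) := by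
    exact_mod_cast NNReal.rpow_add_le_mul_rpow_add_rpow u w hp1
  refine mean.trans ?_
  gcongr
  exact Real.rpow_le_self_of_one_le one_le_two (by linarith)

theorem integral_sub_const_rpow {q : ℝ} (hq : -1 < q) (x c d : ℝ) :
    ∫ y in c..d, (y - x) ^ q = ((d - x) ^ (q + 1) - (c - x) ^ (q + 1)) / (q + 1) := by
  rw [intervalIntegral.integral_comp_sub_right (· ^ q), integral_rpow (.inl hq)]

theorem integral_const_sub_rpow {q : ℝ} (hq : -1 < q) (x c d : ℝ) :
    ∫ y in c..d, (x - y) ^ q = ((x - c) ^ (q + 1) - (x - d) ^ (q + 1)) / (q + 1) := by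
  rw [intervalIntegral.integral_comp_sub_left (· ^ q), integral_rpow (.inl hq)]

theorem intervalIntegrable_sub_const_rpow {q : ℝ} (hq : -1 < q) (x c d : ℝ) :
    IntervalIntegrable (fun y => (y - x) ^ q) volume c d := by
  simpa using
    (intervalIntegral.intervalIntegrable_rpow' (a := c - x) (b := d - x) hq).comp_sub_right x

theorem intervalIntegrable_const_sub_rpow {q : ℝ} (hq : -1 < q) (x c d : ℝ) :
    IntervalIntegrable (fun y => (x - y) ^ q) volume c d := by
  simpa using
    (intervalIntegral.intervalIntegrable_rpow' (a := x - c) (b := x - d) hq).comp_sub_left x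

theorem setLIntegral_Ioc_ofReal_eq {f : ℝ → ℝ} {c d : ℝ} (hcd : c ≤ d)
    (hf : IntervalIntegrable f volume c d) (hf0 : ∀ x ∈ Ioc c d, 0 ≤ f x) :
    ∫⁻ x in Ioc c d, ENNReal.ofReal (f x) = ENNReal.ofReal (∫ x in c..d, f x) := by
  rw [intervalIntegral.integral_of_le hcd,
    ofReal_integral_eq_lintegral_ofReal hf.1 (ae_restrict_of_forall_mem measurableSet_Ioc hf0)]

theorem lintegral_indicator_Ioc_abs_rpow {β a b s x : ℝ} (hβ : β < 1) (hxs : x < s)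
    (has : a < s) (hsb : s ≤ b) :
    ∫⁻ y in Ioc a b, (Ioc x y).indicator (fun _ => ENNReal.ofReal (|y - x| ^ (-β))) s =
      ENNReal.ofReal (((b - x) ^ (1 - β) - (s - x) ^ (1 - β)) / (1 - β)) := by
  have hind (y : ℝ) : (Ioc x y).indicator (fun _ => ENNReal.ofReal (|y - x| ^ (-β))) s =
      (Ici s).indicator (fun y => ENNReal.ofReal (|y - x| ^ (-β))) y := by
    simp [indicator_apply, hxs]
  have hset : Ici s ∩ Ioc a b = Icc s b := by
    ext y; simp only [mem_inter_iff, mem_Ici, mem_Ioc, mem_Icc]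
    constructor
    · rintro ⟨h1, -, h3⟩; exact ⟨h1, h3⟩
    · rintro ⟨h1, h2⟩; exact ⟨h1, has.trans_le h1, h2⟩
  simp_rw [hind]
  rw [lintegral_indicator measurableSet_Ici, Measure.restrict_restrict measurableSet_Ici, hset,
    setLIntegral_congr Ioc_ae_eq_Icc.symm]
  have habs : ∀ y ∈ Ioc s b,
      ENNReal.ofReal (|y - x| ^ (-β)) = ENNReal.ofReal ((y - x) ^ (-β)) :=
    fun y hy => by rw [abs_of_pos (by linarith [hy.1])]
  rw [setLIntegral_congr_fun measurableSet_Ioc habs, setLIntegral_Ioc_ofReal_eq hsb,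
    integral_sub_const_rpow (by linarith), neg_add_eq_sub]
  · exact intervalIntegrable_sub_const_rpow (by linarith) x s b
  · exact fun y hy => Real.rpow_nonneg (by linarith [hy.1]) _

theorem lintegral_lintegral_indicator_Ioc_abs_rpow {β a b s : ℝ} (hβ : β < 1) (has : a < s)
    (hsb : s ≤ b) :
    ∫⁻ x in Ioc a b, ∫⁻ y in Ioc a b,
        (Ioc x y).indicator (fun _ => ENNReal.ofReal (|y - x| ^ (-β))) s =
      ENNReal.ofReal (((b - a) ^ (2 - β) - (b - s) ^ (2 - β) - (s - a) ^ (2 - β)) /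
        ((1 - β) * (2 - β))) := by
  have hq : -1 < 1 - β := by linarith
  have hinner (x : ℝ) :
      ∫⁻ y in Ioc a b, (Ioc x y).indicator (fun _ => ENNReal.ofReal (|y - x| ^ (-β))) s =
        (Iio s).indicator
          (fun x => ENNReal.ofReal (((b - x) ^ (1 - β) - (s - x) ^ (1 - β)) / (1 - β))) x := by
    by_cases hxs : x < s
    · rw [indicator_of_mem (mem_Iio.2 hxs), lintegral_indicator_Ioc_abs_rpow hβ hxs has hsb]
    · simp [hxs]
  have hset : Iio s ∩ Ioc a b = Ioo a s := by
    ext x; simp only [mem_inter_iff, mem_Iio, mem_Ioc, mem_Ioo]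
    constructor
    · rintro ⟨h1, h2, -⟩; exact ⟨h2, h1⟩
    · rintro ⟨h1, h2⟩; exact ⟨h2, h1, h2.le.trans hsb⟩
  simp_rw [hinner]
  rw [lintegral_indicator measurableSet_Iio, Measure.restrict_restrict measurableSet_Iio, hset,
    setLIntegral_congr Ioo_ae_eq_Ioc, setLIntegral_Ioc_ofReal_eq has.le]
  · rw [intervalIntegral.integral_div, intervalIntegral.integral_sub
      (intervalIntegrable_const_sub_rpow hq b a s) (intervalIntegrable_const_sub_rpow hq s a s),
      integral_const_sub_rpow hq, integral_const_sub_rpow hq, sub_self,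
      Real.zero_rpow (by linarith), show 1 - β + 1 = 2 - β by ring]
    have : 1 - β ≠ 0 := by linarith
    have : 2 - β ≠ 0 := by linarith
    congr 1
    field_simp
    ring
  · exact ((intervalIntegrable_const_sub_rpow hq b a s).sub
      (intervalIntegrable_const_sub_rpow hq s a s)).div_const _
  · intro x hx
    have := Real.rpow_le_rpow (by linarith [hx.2]) (by linarith : s - x ≤ b - x)
      (by linarith : 0 ≤ 1 - β)
    exact div_nonneg (sub_nonneg.2 this) (by linarith)

noncomputable def crossingWeight (β a b s : ℝ) : ℝ≥0∞ :=
  ∫⁻ x in Ioc a b, ∫⁻ y in Ioc a b, (Ι x y).indicator (fun _ => ENNReal.ofReal (|y - x| ^ (-β))) s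

theorem crossingWeight_le {β a b s : ℝ} (hβ0 : 0 ≤ β) (hβ1 : β < 1) (hs : s ∈ Ioc a b) :
    crossingWeight β a b s ≤ ENNReal.ofReal ((b - a) ^ (2 - β) / (1 - β)) := by
  set ψ : ℝ → ℝ → ℝ≥0∞ := fun x y =>
    (Ioc x y).indicator (fun _ => ENNReal.ofReal (|y - x| ^ (-β))) s
  have hsplit (x y : ℝ) :
      (Ι x y).indicator (fun _ => ENNReal.ofReal (|y - x| ^ (-β))) s = ψ x y + ψ y x := by
    have hdisj : Disjoint (Ioc x y) (Ioc y x) :=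
      Set.disjoint_left.2 fun z h1 h2 => by linarith [h1.1, h1.2, mem_Ioc.1 h2]
    rw [uIoc_eq_union, indicator_union_of_disjoint hdisj]
    show _ = _ + (Ioc y x).indicator (fun _ => ENNReal.ofReal (|x - y| ^ (-β))) s
    rw [abs_sub_comm x y]
  have hψ : Measurable (Function.uncurry ψ) := by
    have hset : MeasurableSet {p : ℝ × ℝ | s ∈ Ioc p.1 p.2} :=
      (measurableSet_lt measurable_fst measurable_const).inter
        (measurableSet_le measurable_const measurable_snd)
    exact (Measurable.ennreal_ofReal (by fun_prop)).indicator hset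
  have mean := Real.rpow_add_le_two_mul_rpow_add_rpow (p := 2 - β) (sub_nonneg.2 hs.2)
    (sub_nonneg.2 hs.1.le) (by linarith) (by linarith)
  rw [show b - s + (s - a) = b - a by ring] at mean
  have hL : 0 ≤ (b - a) ^ (2 - β) := Real.rpow_nonneg (by linarith [hs.1, hs.2]) _
  calc _ = ∫⁻ x in Ioc a b, ∫⁻ y in Ioc a b, (ψ x y + ψ y x) := by
        simp_rw [crossingWeight, hsplit]
    _ = (∫⁻ x in Ioc a b, ∫⁻ y in Ioc a b, ψ x y) + ∫⁻ x in Ioc a b, ∫⁻ y in Ioc a b, ψ y x := by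
      have inner (x : ℝ) : ∫⁻ y in Ioc a b, (ψ x y + ψ y x) =
          (∫⁻ y in Ioc a b, ψ x y) + ∫⁻ y in Ioc a b, ψ y x :=
        lintegral_add_left hψ.of_uncurry_left _
      simp_rw [inner]
      exact lintegral_add_left hψ.lintegral_prod_right' _
    _ = 2 * ∫⁻ x in Ioc a b, ∫⁻ y in Ioc a b, ψ x y := by
      have hψswap : Measurable (Function.uncurry fun x y => ψ y x) := hψ.comp measurable_swap
      rw [lintegral_lintegral_swap hψswap.aemeasurable, two_mul]
    _ = ENNReal.ofReal (2 * (((b - a) ^ (2 - β) - (b - s) ^ (2 - β) - (s - a) ^ (2 - β)) /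
        ((1 - β) * (2 - β)))) := by
      rw [lintegral_lintegral_indicator_Ioc_abs_rpow hβ1 hs.1 hs.2,
        ENNReal.ofReal_mul zero_le_two, ENNReal.ofReal_ofNat]
    _ ≤ _ := by
      gcongr
      have h1β : 0 ≤ 1 - β := by linarith
      rw [mul_div_assoc', div_le_div_iff₀ (by nlinarith) (by linarith)]
      nlinarith [mul_nonneg (mul_nonneg hL h1β) h1β]

theorem measurable_uIoc_indicator_abs_rpow (β : ℝ) :
    Measurable fun p : ℝ × ℝ × ℝ =>
      (Ι p.1 p.2.1).indicator (fun _ => ENNReal.ofReal (|p.2.1 - p.1| ^ (-β))) p.2.2 := by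
  have hset : MeasurableSet {p : ℝ × ℝ × ℝ | p.2.2 ∈ Ι p.1 p.2.1} :=
    (measurableSet_lt (measurable_fst.min measurable_snd.fst) measurable_snd.snd).inter
      (measurableSet_le measurable_snd.snd (measurable_fst.max measurable_snd.fst))
  exact (Measurable.ennreal_ofReal (by fun_prop)).indicator hset

theorem ofReal_sq_div_abs_rpow_le_lintegral {β a b x y : ℝ} {v g : ℝ → ℝ}
    (hx : x ∈ Ioc a b) (hy : y ∈ Ioc a b) (hg2 : IntegrableOn (fun s => g s ^ 2) (Ioc a b))
    (hvxy : v y - v x = ∫ s in x..y, g s) :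
    ENNReal.ofReal (|v y - v x| ^ 2 / |y - x| ^ (1 + β)) ≤
      ∫⁻ s in Ioc a b, ENNReal.ofReal (g s ^ 2) *
        (Ι x y).indicator (fun _ => ENNReal.ofReal (|y - x| ^ (-β))) s := by
  have hsub : Ι x y ⊆ Ioc a b := Ioc_subset_Ioc (le_min hx.1.le hy.1.le) (max_le hx.2 hy.2)
  have hg2xy := hg2.mono_set hsub
  calc ENNReal.ofReal (|v y - v x| ^ 2 / |y - x| ^ (1 + β))
      ≤ ENNReal.ofReal (|y - x| ^ (-β) * ∫ s in Ι x y, g s ^ 2) := by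
        rw [sq_abs, hvxy]
        exact ENNReal.ofReal_le_ofReal (sq_intervalIntegral_div_abs_rpow_le hg2xy)
    _ = ∫⁻ s in Ι x y, ENNReal.ofReal (g s ^ 2) * ENNReal.ofReal (|y - x| ^ (-β)) := by
        rw [ENNReal.ofReal_mul (Real.rpow_nonneg (abs_nonneg _) _), mul_comm,
          ofReal_integral_eq_lintegral_ofReal hg2xy (.of_forall fun s => sq_nonneg _),
          lintegral_mul_const' _ _ ENNReal.ofReal_ne_top]
    _ = _ := by
        rw [← Measure.restrict_restrict_of_subset hsub, ← lintegral_indicator measurableSet_uIoc]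
        simp_rw [indicator_mul_right]

theorem intervalIntegral_sq_sub_div_abs_rpow_le {β a b : ℝ} (hβ0 : 0 ≤ β) (hβ1 : β < 1)
    (hab : a ≤ b) {v g : ℝ → ℝ} (hg2 : IntegrableOn (fun s => g s ^ 2) (Icc a b))
    (hv : ∀ x ∈ Icc a b, ∀ y ∈ Icc a b, v y - v x = ∫ s in x..y, g s) :
    ∫ x in a..b, ∫ y in a..b, |v y - v x| ^ 2 / |y - x| ^ (1 + β) ≤
      1 / (1 - β) * (b - a) ^ (2 - β) * ∫ s in a..b, g s ^ 2 := by
  have hg2' : IntegrableOn (fun s => g s ^ 2) (Ioc a b) := hg2.mono_set Ioc_subset_Icc_self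
  have hF (x y : ℝ) : 0 ≤ |v y - v x| ^ 2 / |y - x| ^ (1 + β) := by positivity
  have hC : 0 ≤ 1 / (1 - β) * (b - a) ^ (2 - β) * ∫ s in a..b, g s ^ 2 := by
    have : 0 ≤ ∫ s in a..b, g s ^ 2 := intervalIntegral.integral_nonneg hab fun s _ => sq_nonneg _
    have : 0 < 1 - β := by linarith
    have : 0 ≤ (b - a) ^ (2 - β) := Real.rpow_nonneg (by linarith) _
    positivity
  refine (ENNReal.ofReal_le_ofReal_iff hC).1 ?_
  simp_rw [intervalIntegral.integral_of_le hab]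
  calc ENNReal.ofReal (∫ x in Ioc a b, ∫ y in Ioc a b, |v y - v x| ^ 2 / |y - x| ^ (1 + β))
      ≤ ∫⁻ x in Ioc a b, ∫⁻ y in Ioc a b, ENNReal.ofReal (|v y - v x| ^ 2 / |y - x| ^ (1 + β)) :=
        (ofReal_integral_le_lintegral_ofReal fun x => integral_nonneg (hF x)).trans
          (lintegral_mono fun x => ofReal_integral_le_lintegral_ofReal (hF x))
    _ ≤ ∫⁻ x in Ioc a b, ∫⁻ y in Ioc a b, ∫⁻ s in Ioc a b, ENNReal.ofReal (g s ^ 2) *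
          (Ι x y).indicator (fun _ => ENNReal.ofReal (|y - x| ^ (-β))) s :=
        setLIntegral_mono' measurableSet_Ioc fun x hx => setLIntegral_mono' measurableSet_Ioc
          fun y hy => ofReal_sq_div_abs_rpow_le_lintegral hx hy hg2'
            (hv x (Ioc_subset_Icc_self hx) y (Ioc_subset_Icc_self hy))
    _ = ∫⁻ s in Ioc a b, ENNReal.ofReal (g s ^ 2) * crossingWeight β a b s :=
        lintegral_lintegral_lintegral_mul_left_swap (measurable_uIoc_indicator_abs_rpow β)
          hg2'.aemeasurable.ennreal_ofReal
    _ ≤ ∫⁻ s in Ioc a b, ENNReal.ofReal (g s ^ 2) * ENNReal.ofReal ((b - a) ^ (2 - β) / (1 - β)) :=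
        setLIntegral_mono' measurableSet_Ioc fun s hs => by
          gcongr; exact crossingWeight_le hβ0 hβ1 hs
    _ = ENNReal.ofReal (1 / (1 - β) * (b - a) ^ (2 - β) * ∫ s in Ioc a b, g s ^ 2) := by
        rw [lintegral_mul_const' _ _ ENNReal.ofReal_ne_top,
          ← ofReal_integral_eq_lintegral_ofReal hg2' (.of_forall fun s => sq_nonneg _),
          ← ENNReal.ofReal_mul (setIntegral_nonneg measurableSet_Ioc fun s _ => sq_nonneg _)]
        congr 1
        ring

theorem diagonal_terms_bound_general (r h : ℝ) (hr0 : 0 < r) (hr : r < 1 / 2)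
    (N : ℕ) (t : ℕ → ℝ) (ht0 : t 0 = 0) (htN : t N = 1)
    (hmono : ∀ i < N, t i < t (i + 1))
    (hlen : ∀ i < N, t (i + 1) - t i ≤ h)
    (v g : ℝ → ℝ)
    (hg_sq : IntegrableOn (fun s => g s ^ 2) (Icc (0:ℝ) 1))
    (hv : ∀ p ∈ Icc (0:ℝ) 1, ∀ q ∈ Icc (0:ℝ) 1, v q - v p = ∫ s in p..q, g s) :
    ∑ i ∈ Finset.range N,
        ∫ x in t i..t (i + 1), ∫ y in t i..t (i + 1),
          |v y - v x| ^ 2 / |y - x| ^ (1 + 2 * r) ≤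
      (1 / (1 - 2 * r)) * h ^ (2 - 2 * r) * ∫ s in (0:ℝ)..1, g s ^ 2 := by
  have htmono : MonotoneOn t (Iic N) := (strictMonoOn_Iic_of_lt_succ hmono).monotoneOn
  have hsub (i : ℕ) (hi : i < N) : Icc (t i) (t (i + 1)) ⊆ Icc 0 1 :=
    Icc_subset_Icc (ht0 ▸ htmono (Nat.zero_le N) hi.le (Nat.zero_le i))
      (htN ▸ htmono (Nat.succ_le_of_lt hi) (mem_Iic.2 le_rfl) hi)
  have hg_sq' (i : ℕ) (hi : i < N) := hg_sq.mono_set (hsub i hi)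
  calc _ ≤ ∑ i ∈ Finset.range N,
        1 / (1 - 2 * r) * h ^ (2 - 2 * r) * ∫ s in t i..t (i + 1), g s ^ 2 := by
        refine Finset.sum_le_sum fun i hi => ?_
        have hi := Finset.mem_range.1 hi
        refine (intervalIntegral_sq_sub_div_abs_rpow_le (by linarith) (by linarith)
          (hmono i hi).le (hg_sq' i hi)
          fun x hx y hy => hv x (hsub i hi hx) y (hsub i hi hy)).trans ?_
        have : 0 ≤ ∫ s in t i..t (i + 1), g s ^ 2 :=
          intervalIntegral.integral_nonneg (hmono i hi).le fun s _ => sq_nonneg (g s)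
        gcongr
        · exact (one_div_pos.2 (by linarith)).le
        · linarith [hmono i hi]
        · linarith
        · exact hlen i hi
    _ = _ := by
      rw [← Finset.mul_sum, intervalIntegral.sum_integral_adjacent_intervals fun i hi =>
        (intervalIntegrable_iff_integrableOn_Icc_of_le (hmono i hi).le).2 (hg_sq' i hi), ht0, htN]

/-- Diagonal terms bound in Lemma 1: for a partition `0 = t₀ < ⋯ < t_N = 1`
with subintervals of length at most `h`, and `v` absolutely continuous with
square-integrable derivative `g`,
`∑ᵢ ∬_{γᵢ×γᵢ} |v y - v x|² / |y - x|^(1+2r) ≤ (1/(1-2r)) h^(2-2r) ∫₀¹ g²`. -/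
theorem diagonal_terms_bound (r h : ℝ) (hr0 : 0 < r) (hr : r < 1 / 2) (hh : 0 < h)
    (N : ℕ) (t : ℕ → ℝ) (ht0 : t 0 = 0) (htN : t N = 1)
    (hmono : ∀ i < N, t i < t (i + 1))
    (hlen : ∀ i < N, t (i + 1) - t i ≤ h)
    (v g : ℝ → ℝ)
    (hg_int : IntegrableOn g (Icc (0:ℝ) 1))
    (hg_sq : IntegrableOn (fun s => g s ^ 2) (Icc (0:ℝ) 1))
    (hv : ∀ p ∈ Icc (0:ℝ) 1, ∀ q ∈ Icc (0:ℝ) 1, v q - v p = ∫ s in p..q, g s) :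
    ∑ i ∈ Finset.range N,
        ∫ x in t i..t (i + 1), ∫ y in t i..t (i + 1),
          |v y - v x| ^ 2 / |y - x| ^ (1 + 2 * r) ≤
      (1 / (1 - 2 * r)) * h ^ (2 - 2 * r) * ∫ s in (0:ℝ)..1, g s ^ 2 :=
  diagonal_terms_bound_general r h hr0 hr N t ht0 htN hmono hlen v g hg_sq hv
end

section
/- Let h > 0, let 0 = t₀ < t₁ < ⋯ < t_N = 1 be a partition of I = (0,1) into subintervals γᵢ = (tᵢ₋₁, tᵢ) each of length at most h, let v : [0,1] → ℝ be absolutely continuous with square-integrable derivative g, choose points xᵢ ∈ γᵢ, and let v_h = ∑_{i=1}^N v(xᵢ) 1_{γᵢ} be the piecewise constant interpolant. Then ∫₀¹ |v(x) − v_h(x)|² dx ≤ h² · ∫₀¹ g(t)² dt. -/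
/-!
On a cell `γᵢ` the error is `v x - v xᵢ = ∫ g` over `[xᵢ, x] ⊆ γᵢ`, so by Cauchy–Schwarz its
square is at most `|γᵢ| ∫_{γᵢ} g²` at every point of `γᵢ`. Integrating over `γᵢ` gives
`|γᵢ|² ∫_{γᵢ} g² ≤ h² ∫_{γᵢ} g²`, and summing over the cells gives the bound.
-/

open MeasureTheory Set Finset

theorem sq_integral_le_measureReal_mul_integral_sq {α : Type*} [MeasurableSpace α]
    {μ : Measure α} [IsFiniteMeasure μ] {f : α → ℝ} (hf : Integrable f μ)
    (hf2 : Integrable (fun x => f x ^ 2) μ) :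
    (∫ x, f x ∂μ) ^ 2 ≤ μ.real univ * ∫ x, f x ^ 2 ∂μ := by
  -- `c ↦ ∫ (c - f)²` is a nonnegative quadratic, so its discriminant is nonpositive.
  have hquad (c : ℝ) :
      0 ≤ μ.real univ * (c * c) + (-2 * ∫ x, f x ∂μ) * c + ∫ x, f x ^ 2 ∂μ := by
    have hlin : Integrable (fun x => c * c - 2 * c * f x) μ :=
      (integrable_const _).sub (hf.const_mul _)
    calc 0 ≤ ∫ x, (c - f x) ^ 2 ∂μ := integral_nonneg fun x => sq_nonneg _
      _ = ∫ x, (c * c - 2 * c * f x) + f x ^ 2 ∂μ := by congr 1; ext x; ring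
      _ = _ := by
        rw [integral_add hlin hf2, integral_sub (integrable_const _) (hf.const_mul _),
          integral_const, integral_const_mul, smul_eq_mul]
        ring
  have hdisc := discrim_le_zero hquad
  rw [discrim] at hdisc
  linarith

section Interval

variable {a b : ℝ} {g v w : ℝ → ℝ}

theorem sq_intervalIntegral_le_mul_integral_sq (hg : IntegrableOn g (Icc a b))
    (hg2 : IntegrableOn (fun s => g s ^ 2) (Icc a b)) {p q : ℝ} (hp : p ∈ Icc a b)
    (hq : q ∈ Icc a b) :
    (∫ s in p..q, g s) ^ 2 ≤ (b - a) * ∫ s in a..b, g s ^ 2 := by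
  have hab : a ≤ b := hp.1.trans hp.2
  have hgI : IntegrableOn g (Ioc a b) := hg.mono_set Ioc_subset_Icc_self
  have hg2I : IntegrableOn (fun s => ‖g s‖ ^ 2) (Ioc a b) := by
    simpa only [Real.norm_eq_abs, sq_abs] using hg2.mono_set Ioc_subset_Icc_self
  have hbound : ‖∫ s in p..q, g s‖ ≤ ∫ s in Ioc a b, ‖g s‖ :=
    calc ‖∫ s in p..q, g s‖ ≤ ∫ s in uIoc p q, ‖g s‖ :=
          intervalIntegral.norm_integral_le_integral_norm_uIoc
      _ ≤ ∫ s in Ioc a b, ‖g s‖ :=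
          setIntegral_mono_set hgI.norm (ae_of_all _ fun s => norm_nonneg _)
            (Ioc_subset_Ioc (le_min hp.1 hq.1) (max_le hp.2 hq.2)).eventuallyLE
  have : IsFiniteMeasure (volume.restrict (Ioc a b)) := by
    rw [isFiniteMeasure_restrict]; exact measure_Ioc_lt_top.ne
  calc (∫ s in p..q, g s) ^ 2 = ‖∫ s in p..q, g s‖ ^ 2 := (sq_abs _).symm
    _ ≤ (∫ s in Ioc a b, ‖g s‖) ^ 2 := pow_le_pow_left₀ (norm_nonneg _) hbound 2
    _ ≤ (b - a) * ∫ s in Ioc a b, ‖g s‖ ^ 2 := by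
        simpa only [measureReal_restrict_apply_univ, Real.volume_real_Ioc_of_le hab] using
          sq_integral_le_measureReal_mul_integral_sq hgI.norm hg2I
    _ = (b - a) * ∫ s in a..b, g s ^ 2 := by
        simp only [Real.norm_eq_abs, sq_abs, intervalIntegral.integral_of_le hab]

theorem continuousOn_of_sub_eq_intervalIntegral (hg : IntegrableOn g (Icc a b))
    (hv : ∀ p ∈ Icc a b, ∀ q ∈ Icc a b, v q - v p = ∫ s in p..q, g s) :
    ContinuousOn v (Icc a b) := by
  rcases lt_or_ge b a with hba | hab
  · simp [Icc_eq_empty_of_lt hba]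
  have hprim : ContinuousOn (fun x => ∫ s in a..x, g s) (Icc a b) := by
    rw [← uIcc_of_le hab] at hg ⊢
    exact intervalIntegral.continuousOn_primitive_interval hg
  refine ((continuousOn_const (c := v a)).add hprim).congr fun x hx => ?_
  simp only [Pi.add_apply]
  linarith [hv a (left_mem_Icc.2 hab) x hx]

variable {c : ℝ}

theorem intervalIntegral_sq_sub_le_of_eqOn_Ioc (hg : IntegrableOn g (Icc a b))
    (hg2 : IntegrableOn (fun s => g s ^ 2) (Icc a b))
    (hv : ∀ p ∈ Icc a b, ∀ q ∈ Icc a b, v q - v p = ∫ s in p..q, g s) (hc : c ∈ Icc a b)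
    (hw : ∀ x ∈ Ioc a b, w x = v c) :
    ∫ x in a..b, |v x - w x| ^ 2 ≤ (b - a) ^ 2 * ∫ s in a..b, g s ^ 2 := by
  have hab : a ≤ b := hc.1.trans hc.2
  have hpt : ∀ x ∈ uIoc a b, ‖|v x - w x| ^ 2‖ ≤ (b - a) * ∫ s in a..b, g s ^ 2 := by
    intro x hx
    rw [uIoc_of_le hab] at hx
    rw [Real.norm_of_nonneg (sq_nonneg _), sq_abs, hw x hx, hv c hc x (Ioc_subset_Icc_self hx)]
    exact sq_intervalIntegral_le_mul_integral_sq hg hg2 hc (Ioc_subset_Icc_self hx)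
  calc ∫ x in a..b, |v x - w x| ^ 2 ≤ ‖∫ x in a..b, |v x - w x| ^ 2‖ := Real.le_norm_self _
    _ ≤ (b - a) * (∫ s in a..b, g s ^ 2) * |b - a| :=
        intervalIntegral.norm_integral_le_of_norm_le_const hpt
    _ = (b - a) ^ 2 * ∫ s in a..b, g s ^ 2 := by
        rw [abs_of_nonneg (sub_nonneg.2 hab)]; ring

theorem intervalIntegrable_sq_sub_of_eqOn_Ioc (hab : a ≤ b) (hv : ContinuousOn v (Icc a b))
    (hw : ∀ x ∈ Ioc a b, w x = v c) :
    IntervalIntegrable (fun x => |v x - w x| ^ 2) volume a b := by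
  have hcont : ContinuousOn (fun x => |v x - v c| ^ 2) (Icc a b) := by fun_prop
  rw [intervalIntegrable_iff_integrableOn_Ioc_of_le hab]
  exact (hcont.integrableOn_Icc.mono_set Ioc_subset_Icc_self).congr_fun
    (fun x hx => by simp only [hw x hx]) measurableSet_Ioc

end Interval

theorem MonotoneOn.Icc_succ_subset_Icc {α : Type*} [Preorder α] {t : ℕ → α} {N i : ℕ}
    (ht : MonotoneOn t (Set.Iic N)) (hi : i < N) : Icc (t i) (t (i + 1)) ⊆ Icc (t 0) (t N) :=
  Icc_subset_Icc (ht (Set.mem_Iic.2 (Nat.zero_le N)) (Set.mem_Iic.2 hi.le) (Nat.zero_le i))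
    (ht (Set.mem_Iic.2 hi) (Set.mem_Iic.2 le_rfl) hi)

theorem sum_indicator_Ioc_eq_of_mem {α M : Type*} [LinearOrder α] [AddCommMonoid M]
    {t : ℕ → α} {N i : ℕ} (ht : MonotoneOn t (Set.Iic N)) (hi : i < N) (c : ℕ → M) {x : α}
    (hx : x ∈ Ioc (t i) (t (i + 1))) :
    ∑ j ∈ range N, (Ioc (t j) (t (j + 1))).indicator (fun _ => c j) x = c i := by
  rw [sum_eq_single_of_mem i (mem_range.2 hi), indicator_of_mem hx]
  intro j hj hji
  refine indicator_of_notMem (fun hxj => ?_) _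
  have hjN : j < N := mem_range.1 hj
  rcases hji.lt_or_gt with hlt | hgt
  · have : t (j + 1) ≤ t i := ht (Set.mem_Iic.2 hjN) (Set.mem_Iic.2 hi.le) hlt
    exact (hx.1.trans_le (hxj.2.trans this)).false
  · have : t (i + 1) ≤ t j := ht (Set.mem_Iic.2 hi) (Set.mem_Iic.2 hjN.le) hgt
    exact (hxj.1.trans_le (hx.2.trans this)).false

theorem L2_interpolation_bound_general (h : ℝ)
    (N : ℕ) (t : ℕ → ℝ) (ht0 : t 0 = 0) (htN : t N = 1)
    (hmono : ∀ i < N, t i < t (i + 1))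
    (hlen : ∀ i < N, t (i + 1) - t i ≤ h)
    (v g : ℝ → ℝ)
    (hg_int : IntegrableOn g (Icc (0:ℝ) 1))
    (hg_sq : IntegrableOn (fun s => g s ^ 2) (Icc (0:ℝ) 1))
    (hv : ∀ p ∈ Icc (0:ℝ) 1, ∀ q ∈ Icc (0:ℝ) 1, v q - v p = ∫ s in p..q, g s)
    (xp : ℕ → ℝ) (hxp : ∀ i < N, xp i ∈ Ioc (t i) (t (i + 1)))
    (vh : ℝ → ℝ)
    (hvh : ∀ y, vh y =
      ∑ i ∈ Finset.range N, Set.indicator (Ioc (t i) (t (i + 1))) (fun _ => v (xp i)) y) :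
    ∫ x in (0:ℝ)..1, |v x - vh x| ^ 2 ≤ h ^ 2 * ∫ s in (0:ℝ)..1, g s ^ 2 := by
  have ht : MonotoneOn t (Set.Iic N) := (strictMonoOn_Iic_of_lt_succ hmono).monotoneOn
  have hcell : ∀ i < N, Icc (t i) (t (i + 1)) ⊆ Icc 0 1 := fun i hi =>
    ht0 ▸ htN ▸ ht.Icc_succ_subset_Icc hi
  have hvh_cell : ∀ i < N, ∀ x ∈ Ioc (t i) (t (i + 1)), vh x = v (xp i) := fun i hi x hx =>
    (hvh x).trans (sum_indicator_Ioc_eq_of_mem ht hi (fun j => v (xp j)) hx)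
  have hv_cont := continuousOn_of_sub_eq_intervalIntegral hg_int hv
  have herr_int :
      ∀ i < N, IntervalIntegrable (fun x => |v x - vh x| ^ 2) volume (t i) (t (i + 1)) :=
    fun i hi => intervalIntegrable_sq_sub_of_eqOn_Ioc (hmono i hi).le
      (hv_cont.mono (hcell i hi)) (hvh_cell i hi)
  have hg_sq_int : ∀ i < N, IntervalIntegrable (fun s => g s ^ 2) volume (t i) (t (i + 1)) :=
    fun i hi =>
      (hg_sq.mono_set ((uIcc_of_le (hmono i hi).le).trans_subset (hcell i hi))).intervalIntegrable
  rw [← ht0, ← htN, ← intervalIntegral.sum_integral_adjacent_intervals herr_int,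
    ← intervalIntegral.sum_integral_adjacent_intervals hg_sq_int, mul_sum]
  refine sum_le_sum fun i hi => ?_
  rw [Finset.mem_range] at hi
  calc ∫ x in t i..t (i + 1), |v x - vh x| ^ 2
      ≤ (t (i + 1) - t i) ^ 2 * ∫ s in t i..t (i + 1), g s ^ 2 :=
        intervalIntegral_sq_sub_le_of_eqOn_Ioc (hg_int.mono_set (hcell i hi))
          (hg_sq.mono_set (hcell i hi)) (fun p hp q hq => hv p (hcell i hi hp) q (hcell i hi hq))
          (Ioc_subset_Icc_self (hxp i hi)) (hvh_cell i hi)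
    _ ≤ h ^ 2 * ∫ s in t i..t (i + 1), g s ^ 2 :=
        mul_le_mul_of_nonneg_right (pow_le_pow_left₀ (sub_nonneg.2 (hmono i hi).le) (hlen i hi) 2)
          (intervalIntegral.integral_nonneg (hmono i hi).le fun s _ => sq_nonneg (g s))

/-- L² (zeroth order) part of Lemma 1: for a partition of `(0,1)` into
subintervals of length at most `h` and `v_h` the piecewise constant interpolant
of an absolutely continuous function `v` with square-integrable derivative `g`,
`∫₀¹ |v - v_h|² ≤ h² ∫₀¹ g²`. -/
theorem L2_interpolation_bound (h : ℝ) (hh : 0 < h)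
    (N : ℕ) (t : ℕ → ℝ) (ht0 : t 0 = 0) (htN : t N = 1)
    (hmono : ∀ i < N, t i < t (i + 1))
    (hlen : ∀ i < N, t (i + 1) - t i ≤ h)
    (v g : ℝ → ℝ)
    (hg_int : IntegrableOn g (Icc (0:ℝ) 1))
    (hg_sq : IntegrableOn (fun s => g s ^ 2) (Icc (0:ℝ) 1))
    (hv : ∀ p ∈ Icc (0:ℝ) 1, ∀ q ∈ Icc (0:ℝ) 1, v q - v p = ∫ s in p..q, g s)
    (xp : ℕ → ℝ) (hxp : ∀ i < N, xp i ∈ Ioc (t i) (t (i + 1)))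
    (vh : ℝ → ℝ)
    (hvh : ∀ y, vh y =
      ∑ i ∈ Finset.range N, Set.indicator (Ioc (t i) (t (i + 1))) (fun _ => v (xp i)) y) :
    ∫ x in (0:ℝ)..1, |v x - vh x| ^ 2 ≤ h ^ 2 * ∫ s in (0:ℝ)..1, g s ^ 2 :=
  L2_interpolation_bound_general h N t ht0 htN hmono hlen v g hg_int hg_sq hv xp hxp vh hvh
end

section
/- Let V be a real Hilbert space, let a : V × V → ℝ be a bilinear form with |a(u,v)| ≤ M‖u‖‖v‖ for all u, v ∈ V and a(v,v) ≥ α‖v‖² for all v ∈ V, where M ≥ 0 and α > 0. Let f, ξ be continuous linear functionals on V and let u ∈ V satisfy a(u,v) + ξ(v) = f(v) for all v ∈ V. Let K_h be a subspace of V and let u_h ∈ K_h satisfy a(u_h, v_h) = f(v_h) for all v_h ∈ K_h. Then for every w_h ∈ K_h and every continuous linear functional η on V that vanishes on K_h, one has α‖u_h − w_h‖ ≤ M‖u − w_h‖ + ‖ξ − η‖_{V'}, where ‖·‖_{V'} denotes the operator (dual) norm. -/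
/-!
Testing coercivity against `e = u_h - w_h ∈ K_h`, the two variational equations together with
`η e = 0` give `a(e, e) = a(u - w_h, e) + (ξ - η)(e)`; bounding the right-hand side by
`(M ‖u - w_h‖ + ‖ξ - η‖) ‖e‖` and cancelling one factor `‖e‖` yields the estimate.
-/

lemma mul_le_of_mul_sq_le_mul {α x c : ℝ} (hx : 0 ≤ x) (hc : 0 ≤ c)
    (h : α * x ^ 2 ≤ c * x) : α * x ≤ c := by
  rcases hx.eq_or_lt with rfl | hx
  · simpa using hc
  · exact le_of_mul_le_mul_right (by linarith [h]) hx

lemma galerkin_error_eq {E : Type*} [AddCommGroup E] [Module ℝ E]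
    (a : E →ₗ[ℝ] E →ₗ[ℝ] ℝ) (f ξ η : E →ₗ[ℝ] ℝ) {u uh w v : E}
    (hu : a u v + ξ v = f v) (huh : a uh v = f v) (hη : η v = 0) :
    a (uh - w) v = a (u - w) v + (ξ - η) v := by
  simp only [map_sub, LinearMap.sub_apply, hη]
  linarith

theorem saddle_point_intermediate_general
    {V : Type*} [NormedAddCommGroup V] [InnerProductSpace ℝ V]
    (a : V →ₗ[ℝ] V →ₗ[ℝ] ℝ) (M α : ℝ) (hM : 0 ≤ M)
    (hbound : ∀ u v : V, |a u v| ≤ M * ‖u‖ * ‖v‖)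
    (hcoer : ∀ v : V, α * ‖v‖ ^ 2 ≤ a v v)
    (f ξ : V →L[ℝ] ℝ) (u : V)
    (hu : ∀ v : V, a u v + ξ v = f v)
    (K_h : Submodule ℝ V) (u_h : V) (hu_h : u_h ∈ K_h)
    (huh : ∀ v_h ∈ K_h, a u_h v_h = f v_h)
    (η : V →L[ℝ] ℝ) (hη : ∀ v ∈ K_h, η v = 0)
    (w_h : V) (hw_h : w_h ∈ K_h) :
    α * ‖u_h - w_h‖ ≤ M * ‖u - w_h‖ + ‖ξ - η‖ := by
  set e := u_h - w_h
  have he : e ∈ K_h := K_h.sub_mem hu_h hw_h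
  refine mul_le_of_mul_sq_le_mul (norm_nonneg e) (by positivity) ?_
  calc α * ‖e‖ ^ 2 ≤ a e e := hcoer e
    _ = a (u - w_h) e + (ξ - η) e :=
        galerkin_error_eq a f ξ η (hu e) (huh e he) (hη e he)
    _ ≤ M * ‖u - w_h‖ * ‖e‖ + ‖ξ - η‖ * ‖e‖ :=
        add_le_add ((le_abs_self _).trans (hbound _ _))
          ((Real.le_norm_self _).trans ((ξ - η).le_opNorm e))
    _ = (M * ‖u - w_h‖ + ‖ξ - η‖) * ‖e‖ := by ring

/-- Key intermediate inequality in the proof of Proposition 3: if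
`a` is a bounded (`M`) coercive (`α`) bilinear form on a real Hilbert space `V`,
`u` satisfies `a(u,v) + ξ(v) = f(v)` for all `v ∈ V`, `u_h ∈ K_h` satisfies
`a(u_h, v_h) = f(v_h)` for all `v_h ∈ K_h`, and `η` is a continuous linear
functional vanishing on the subspace `K_h`, then for every `w_h ∈ K_h`,
`α ‖u_h - w_h‖ ≤ M ‖u - w_h‖ + ‖ξ - η‖_{V'}`. -/
theorem saddle_point_intermediate
    {V : Type*} [NormedAddCommGroup V] [InnerProductSpace ℝ V] [CompleteSpace V]
    (a : V →ₗ[ℝ] V →ₗ[ℝ] ℝ) (M α : ℝ) (hM : 0 ≤ M) (hα : 0 < α)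
    (hbound : ∀ u v : V, |a u v| ≤ M * ‖u‖ * ‖v‖)
    (hcoer : ∀ v : V, α * ‖v‖ ^ 2 ≤ a v v)
    (f ξ : V →L[ℝ] ℝ) (u : V)
    (hu : ∀ v : V, a u v + ξ v = f v)
    (K_h : Submodule ℝ V) (u_h : V) (hu_h : u_h ∈ K_h)
    (huh : ∀ v_h ∈ K_h, a u_h v_h = f v_h)
    (η : V →L[ℝ] ℝ) (hη : ∀ v ∈ K_h, η v = 0)
    (w_h : V) (hw_h : w_h ∈ K_h) :
    α * ‖u_h - w_h‖ ≤ M * ‖u - w_h‖ + ‖ξ - η‖ :=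
  saddle_point_intermediate_general a M α hM hbound hcoer f ξ u hu K_h u_h hu_h huh η hη w_h hw_h
end

section
/- (Proposition 3) Let V be a real Hilbert space, let a : V × V → ℝ be a bilinear form with |a(u,v)| ≤ M‖u‖‖v‖ for all u, v ∈ V and a(v,v) ≥ α‖v‖² for all v ∈ V, where M ≥ 0 and α > 0. Let f, ξ be continuous linear functionals on V and let u ∈ V satisfy a(u,v) + ξ(v) = f(v) for all v ∈ V. Let K_h be a subspace of V, let W be a set of continuous linear functionals on V each of which vanishes on K_h, and let u_h ∈ K_h satisfy a(u_h, v_h) = f(v_h) for all v_h ∈ K_h. Then ‖u − u_h‖ ≤ (1 + M/α) · inf_{w_h ∈ K_h} ‖w_h − u‖ + (1/α) · inf_{η ∈ W} ‖ξ − η‖_{V'}, where ‖·‖_{V'} is the dual norm. -/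
/-!
Write `e := u_h - w` for `w ∈ K_h`. Since `e ∈ K_h`, subtracting the two variational equations
gives `a(u_h - u, e) = ξ(e)`, and `ξ(e) = (ξ - η)(e)` for every `η ∈ W`: the multiplier enters
only through its distance to `W`. Splitting `a(e, e) = a(u_h - u, e) + a(u - w, e)` and using
coercivity yields `α ‖e‖ ≤ ‖ξ - η‖ + M ‖w - u‖`, and the triangle inequality
`‖u - u_h‖ ≤ ‖w - u‖ + ‖e‖` gives the estimate for each pair `(w, η)`; then take infima.
-/

section CoerciveBilinear

variable {V : Type*} [SeminormedAddCommGroup V] [NormedSpace ℝ V]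

theorem mul_norm_le_of_coercive {a : V →ₗ[ℝ] V →ₗ[ℝ] ℝ} {α C : ℝ} (hα : 0 < α) (hC : 0 ≤ C)
    (hcoer : ∀ v : V, α * ‖v‖ ^ 2 ≤ a v v) {e : V} (he : a e e ≤ C * ‖e‖) :
    α * ‖e‖ ≤ C := by
  by_contra! hlt
  have hpos : 0 < ‖e‖ := pos_of_mul_pos_right (hC.trans_lt hlt) hα.le
  nlinarith [hcoer e]

theorem norm_sub_le_of_galerkin_of_vanishing {a : V →ₗ[ℝ] V →ₗ[ℝ] ℝ} {M α : ℝ} (hM : 0 ≤ M)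
    (hα : 0 < α) (hbound : ∀ u v : V, |a u v| ≤ M * ‖u‖ * ‖v‖)
    (hcoer : ∀ v : V, α * ‖v‖ ^ 2 ≤ a v v) {f ξ η : V →L[ℝ] ℝ} {u u_h w : V}
    {K : Submodule ℝ V} (hu : ∀ v : V, a u v + ξ v = f v) (hu_h : u_h ∈ K)
    (huh : ∀ v ∈ K, a u_h v = f v) (hw : w ∈ K) (hη : ∀ v ∈ K, η v = 0) :
    ‖u - u_h‖ ≤ (1 + M / α) * ‖w - u‖ + 1 / α * ‖ξ - η‖ := by
  set e := u_h - w with he_def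
  have heK : e ∈ K := K.sub_mem hu_h hw
  have hconsistency : a (u_h - u) e = (ξ - η) e := by
    have h := hu e
    simp only [map_sub, LinearMap.sub_apply, sub_apply, huh e heK, hη e heK]
    linarith
  have hsplit : a e e = a (u_h - u) e + a (u - w) e := by
    rw [← LinearMap.add_apply, ← map_add, sub_add_sub_cancel]
  have hae : a e e ≤ (‖ξ - η‖ + M * ‖w - u‖) * ‖e‖ := by
    rw [hsplit, hconsistency, add_mul, ← norm_sub_rev u w]
    gcongr
    · exact (le_abs_self _).trans ((ξ - η).le_opNorm e)
    · exact (le_abs_self _).trans (hbound _ _)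
  have he : α * ‖e‖ ≤ ‖ξ - η‖ + M * ‖w - u‖ :=
    mul_norm_le_of_coercive hα (by positivity) hcoer hae
  have htri : ‖u - u_h‖ ≤ ‖w - u‖ + ‖e‖ := by
    calc ‖u - u_h‖ = ‖(u - w) - e‖ := by rw [he_def, sub_sub_sub_cancel_right]
      _ ≤ ‖w - u‖ + ‖e‖ := by rw [norm_sub_rev w u]; exact norm_sub_le _ _
  have heα : ‖e‖ ≤ M / α * ‖w - u‖ + 1 / α * ‖ξ - η‖ := by
    rw [div_mul_eq_mul_div, one_div_mul_eq_div, ← add_div, le_div_iff₀ hα]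
    linarith
  linarith

end CoerciveBilinear

theorem saddle_point_error_estimate_general
    {V : Type*} [NormedAddCommGroup V] [InnerProductSpace ℝ V]
    (a : V →ₗ[ℝ] V →ₗ[ℝ] ℝ) (M α : ℝ) (hM : 0 ≤ M) (hα : 0 < α)
    (hbound : ∀ u v : V, |a u v| ≤ M * ‖u‖ * ‖v‖)
    (hcoer : ∀ v : V, α * ‖v‖ ^ 2 ≤ a v v)
    (f ξ : V →L[ℝ] ℝ) (u : V)
    (hu : ∀ v : V, a u v + ξ v = f v)
    (K_h : Submodule ℝ V) (u_h : V) (hu_h : u_h ∈ K_h)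
    (huh : ∀ v_h ∈ K_h, a u_h v_h = f v_h)
    (W : Set (V →L[ℝ] ℝ)) (hWne : W.Nonempty)
    (hW : ∀ η ∈ W, ∀ v ∈ K_h, η v = 0) :
    ‖u - u_h‖ ≤ (1 + M / α) * (⨅ w_h : K_h, ‖(w_h : V) - u‖) +
      (1 / α) * (⨅ η : W, ‖ξ - (η : V →L[ℝ] ℝ)‖) := by
  have : Nonempty W := hWne.to_subtype
  rw [Real.mul_iInf_of_nonneg (by positivity), Real.mul_iInf_of_nonneg (by positivity)]
  exact le_ciInf_add_ciInf fun w η =>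
    norm_sub_le_of_galerkin_of_vanishing hM hα hbound hcoer hu hu_h huh w.2 (hW η η.2)

/-- Proposition 3 (abstract saddle-point error estimate with nonconforming
multiplier space): if `a` is a bounded (`M`) coercive (`α`) bilinear form on a
real Hilbert space `V`, `u` satisfies `a(u,v) + ξ(v) = f(v)` for all `v ∈ V`,
`u_h ∈ K_h` satisfies `a(u_h, v_h) = f(v_h)` for all `v_h ∈ K_h`, and `W` is a
nonempty set of continuous linear functionals vanishing on the subspace `K_h`,
then `‖u - u_h‖ ≤ (1 + M/α) inf_{w_h ∈ K_h} ‖w_h - u‖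
                 + (1/α) inf_{η ∈ W} ‖ξ - η‖_{V'}`. -/
theorem saddle_point_error_estimate
    {V : Type*} [NormedAddCommGroup V] [InnerProductSpace ℝ V] [CompleteSpace V]
    (a : V →ₗ[ℝ] V →ₗ[ℝ] ℝ) (M α : ℝ) (hM : 0 ≤ M) (hα : 0 < α)
    (hbound : ∀ u v : V, |a u v| ≤ M * ‖u‖ * ‖v‖)
    (hcoer : ∀ v : V, α * ‖v‖ ^ 2 ≤ a v v)
    (f ξ : V →L[ℝ] ℝ) (u : V)
    (hu : ∀ v : V, a u v + ξ v = f v)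
    (K_h : Submodule ℝ V) (u_h : V) (hu_h : u_h ∈ K_h)
    (huh : ∀ v_h ∈ K_h, a u_h v_h = f v_h)
    (W : Set (V →L[ℝ] ℝ)) (hWne : W.Nonempty)
    (hW : ∀ η ∈ W, ∀ v ∈ K_h, η v = 0) :
    ‖u - u_h‖ ≤ (1 + M / α) * (⨅ w_h : K_h, ‖(w_h : V) - u‖) +
      (1 / α) * (⨅ η : W, ‖ξ - (η : V →L[ℝ] ℝ)‖) :=
  saddle_point_error_estimate_general a M α hM hα hbound hcoer f ξ u hu K_h u_h hu_h huh W hWne hW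
end

section
/- Let h̃ > 0 and let v : ℝ → ℝ be defined by v(x) = 1 − |x − h̃/2|/(h̃/2) for x ∈ [0, h̃] and v(x) = 0 elsewhere. Then |∫₀^{h̃} v(x) dx − h̃ · v(h̃/2)| = h̃/2. In particular, for the constant density φ ≡ 1 on (0,1), the Dirac approximation error ⟨φ, v⟩ − ⟨φ_h̃, v⟩ with weight λ = ∫₀^{h̃} φ = h̃ placed at the point h̃/2 has absolute value exactly h̃/2, i.e. it is of order exactly one in h̃. -/
open MeasureTheory Set

/-- Not truncated at `0`: this is the P¹ hat function only on `[c - r, c + r]`. -/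
noncomputable def hat (c r x : ℝ) : ℝ := 1 - |x - c| / r

@[simp]
lemma hat_self (c r : ℝ) : hat c r c = 1 := by
  simp [hat]

lemma integral_abs_neg_self {r : ℝ} (hr : 0 ≤ r) : ∫ x in -r..r, |x| = r ^ 2 := by
  have hneg : ∫ x in -r..0, |x| = ∫ x in -r..0, -x :=
    intervalIntegral.integral_congr fun x hx => by
      rw [uIcc_of_le (neg_nonpos.mpr hr)] at hx
      exact abs_of_nonpos hx.2
  have hpos : ∫ x in (0 : ℝ)..r, |x| = ∫ x in (0 : ℝ)..r, x :=
    intervalIntegral.integral_congr fun x hx => by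
      rw [uIcc_of_le hr] at hx
      exact abs_of_nonneg hx.1
  rw [← intervalIntegral.integral_add_adjacent_intervals (b := 0)
    (continuous_abs.intervalIntegrable _ _) (continuous_abs.intervalIntegrable _ _),
    hneg, hpos, intervalIntegral.integral_neg, integral_id, integral_id]
  ring

lemma integral_hat (c : ℝ) {r : ℝ} (hr : 0 < r) : ∫ x in (c - r)..(c + r), hat c r x = r := by
  simp only [hat]
  rw [intervalIntegral.integral_comp_sub_right (fun x => 1 - |x| / r), sub_sub_cancel_left,
    add_sub_cancel_left, intervalIntegral.integral_sub intervalIntegrable_const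
      ((continuous_abs.div_const r).intervalIntegrable _ _),
    intervalIntegral.integral_div, integral_abs_neg_self hr.le, intervalIntegral.integral_const,
    smul_eq_mul, mul_one]
  field_simp
  ring

theorem dirac_saturation_example_general (ht : ℝ) (hht : 0 < ht) (v : ℝ → ℝ)
    (hv_in : ∀ x ∈ Icc (0:ℝ) ht, v x = 1 - |x - ht / 2| / (ht / 2)) :
    |(∫ x in (0:ℝ)..ht, v x) - ht * v (ht / 2)| = ht / 2 := by
  have hv : ∀ x ∈ uIcc 0 ht, v x = hat (ht / 2) (ht / 2) x := fun x hx =>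
    hv_in x (by rwa [uIcc_of_le hht.le] at hx)
  have hint : ∫ x in (0:ℝ)..ht, v x = ht / 2 := by
    rw [intervalIntegral.integral_congr hv]
    simpa only [sub_self, add_halves] using integral_hat (ht / 2) (half_pos hht)
  have hmid : v (ht / 2) = 1 := by
    rw [hv _ (by rw [uIcc_of_le hht.le]; constructor <;> linarith), hat_self]
  rw [hint, hmid, mul_one, abs_sub_comm, abs_of_pos (by linarith)]
  ring

/-- Saturation counterexample (Remark 1): for the tent function
`v(x) = 1 - |x - ht/2|/(ht/2)` on `[0, ht]` (and `0` elsewhere), where `ht`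
plays the role of `h̃ > 0`, the error of the Dirac approximation of the
constant density `φ ≡ 1` with weight `λ = ∫₀^ht 1 = ht` placed at the point
`ht/2` is exactly `ht/2`: `|∫₀^ht v - ht · v(ht/2)| = ht/2`. -/
theorem dirac_saturation_example (ht : ℝ) (hht : 0 < ht) (v : ℝ → ℝ)
    (hv_in : ∀ x ∈ Icc (0:ℝ) ht, v x = 1 - |x - ht / 2| / (ht / 2))
    (hv_out : ∀ x ∉ Icc (0:ℝ) ht, v x = 0) :
    |(∫ x in (0:ℝ)..ht, v x) - ht * v (ht / 2)| = ht / 2 :=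
  dirac_saturation_example_general ht hht v hv_in
end
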